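/- For Gaussian measures N1 = N(mu1, sigma^2 I), N2 = N(mu2, sigma^2 I) on R^d and any nonnegative measurable g with finite second moment under N1, we have E_{N1}[g] - E_{N2}[g] ≤ sqrt(E_{N1}[g^2]) · sqrt( min{ exp(||mu1-mu2||^2/(2 sigma^2)) - 1 , 1 } ). -/

import Mathlib

open MeasureTheory

/-- The density of `N(μ, σ² I)` on `ℝ^d`. -/
noncomputable def gaussPdf (d : ℕ) (μ : EuclideanSpace ℝ (Fin d)) (σ : ℝ)
    (z : EuclideanSpace ℝ (Fin d)) : ℝ :=
  (2 * Real.pi * σ ^ 2) ^ (-(d : ℝ) / 2) * Real.exp (-‖z - μ‖ ^ 2 / (2 * σ ^ 2))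

/-- The Gaussian measure `N(μ, σ² I)` on `ℝ^d`. -/
noncomputable def gaussMeasure (d : ℕ) (μ : EuclideanSpace ℝ (Fin d)) (σ : ℝ) :
    Measure (EuclideanSpace ℝ (Fin d)) :=
  volume.withDensity (fun z => ENNReal.ofReal (gaussPdf d μ σ z))

/-!
Write `p₁, p₂` for the densities of `N₁, N₂` and `r = p₂ / p₁` for the likelihood ratio, so that
`N₂ = r • N₁`. Then `E₁ g - E₂ g = E₁[g (1 - r)] ≤ E₁[g (1 - r)₊]`, which Cauchy–Schwarz bounds by
`‖g‖_{L²(N₁)} ‖(1 - r)₊‖_{L²(N₁)}`; since `0 ≤ (1 - r)₊ ≤ 1`, we have `E₁[(1 - r)₊²] ≤ 1`.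

For the other bound, `p₁ (1 - r)₊² ≤ (p₁ - p₂)₊² / √(p₁ p₂)`. The reflection `z ↦ μ₁ + μ₂ - z`
swaps `p₁` and `p₂`, so the integral of the right side is half of `∫ (p₁ - p₂)² / √(p₁ p₂)`.
Expanding the square, the latter is a combination of the integrals
`∫ p₁ ^ (1 - a) * p₂ ^ a = exp (-a (1 - a) K)` with `K = ‖μ₁ - μ₂‖² / (2σ²)`, namely
`2 (exp (3K/4) - exp (-K/4)) ≤ 2 (exp K - 1)`.
-/

open Real

section LikelihoodRatio

variable {α : Type*} [MeasurableSpace α] {μ : Measure α}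

lemma integral_withDensity_ofReal {r : α → ℝ} (hr : Measurable r) (hr0 : ∀ x, 0 ≤ r x)
    (f : α → ℝ) :
    ∫ x, f x ∂μ.withDensity (fun x => ENNReal.ofReal (r x)) = ∫ x, r x * f x ∂μ := by
  rw [integral_withDensity_eq_integral_toReal_smul hr.ennreal_ofReal
    (.of_forall fun _ => ENNReal.ofReal_lt_top)]
  simp only [ENNReal.toReal_ofReal (hr0 _), smul_eq_mul]

lemma integral_mul_le_sqrt_mul_sqrt {f g : α → ℝ} (hf0 : 0 ≤ᵐ[μ] f) (hg0 : 0 ≤ᵐ[μ] g)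
    (hf : MemLp f 2 μ) (hg : MemLp g 2 μ) :
    ∫ x, f x * g x ∂μ ≤ √(∫ x, f x ^ 2 ∂μ) * √(∫ x, g x ^ 2 ∂μ) := by
  have h := integral_mul_le_Lp_mul_Lq_of_nonneg (p := 2) (q := 2) Real.HolderConjugate.two_two
    hf0 hg0 (by simpa using hf) (by simpa using hg)
  simp only [rpow_two] at h
  rwa [sqrt_eq_rpow, sqrt_eq_rpow]

lemma integral_sub_integral_withDensity_le [IsFiniteMeasure μ] {g r : α → ℝ}
    (hg0 : ∀ x, 0 ≤ g x) (hg : MemLp g 2 μ) (hr : Measurable r) (hr0 : ∀ x, 0 ≤ r x)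
    (hrg : Integrable (fun x => r x * g x) μ) :
    ∫ x, g x ∂μ - ∫ x, g x ∂μ.withDensity (fun x => ENNReal.ofReal (r x)) ≤
      √(∫ x, g x ^ 2 ∂μ) * √(∫ x, max (1 - r x) 0 ^ 2 ∂μ) := by
  have hdef : MemLp (fun x => max (1 - r x) 0) 2 μ :=
    MemLp.of_bound ((measurable_const.sub hr).max measurable_const).aestronglyMeasurable 1
      (.of_forall fun x => by
        rw [Real.norm_of_nonneg (le_max_right _ _)]
        exact max_le (by linarith [hr0 x]) zero_le_one)
  have hg1 := hg.integrable one_le_two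
  calc ∫ x, g x ∂μ - ∫ x, g x ∂μ.withDensity (fun x => ENNReal.ofReal (r x))
      = ∫ x, (g x - r x * g x) ∂μ := by
        rw [integral_withDensity_ofReal hr hr0, integral_sub hg1 hrg]
    _ ≤ ∫ x, g x * max (1 - r x) 0 ∂μ :=
        integral_mono (hg1.sub hrg) (hg.integrable_mul hdef) fun x => by
          nlinarith [hg0 x, le_max_left (1 - r x) 0]
    _ ≤ √(∫ x, g x ^ 2 ∂μ) * √(∫ x, max (1 - r x) 0 ^ 2 ∂μ) :=
        integral_mul_le_sqrt_mul_sqrt (.of_forall hg0) (.of_forall fun _ => le_max_right _ _)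
          hg hdef

lemma integral_max_one_sub_sq_le_one [IsProbabilityMeasure μ] {r : α → ℝ} (hr0 : ∀ x, 0 ≤ r x) :
    ∫ x, max (1 - r x) 0 ^ 2 ∂μ ≤ 1 := by
  refine (integral_mono_of_nonneg (.of_forall fun _ => sq_nonneg _) (integrable_const 1)
    (.of_forall fun x => ?_)).trans_eq (by simp)
  have h := le_max_right (1 - r x) 0
  exact pow_le_one₀ h (max_le (by linarith [hr0 x]) zero_le_one)

end LikelihoodRatio

lemma norm_sub_sq_interpolate {E : Type*} [NormedAddCommGroup E] [InnerProductSpace ℝ E]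
    (a : ℝ) (x y z : E) :
    (1 - a) * ‖z - x‖ ^ 2 + a * ‖z - y‖ ^ 2 =
      ‖z - ((1 - a) • x + a • y)‖ ^ 2 + a * (1 - a) * ‖x - y‖ ^ 2 := by
  simp only [← real_inner_self_eq_norm_sq, inner_sub_left, inner_sub_right, inner_add_left,
    inner_add_right, real_inner_smul_left, real_inner_smul_right, real_inner_comm x y,
    real_inner_comm x z, real_inner_comm y z]
  ring

lemma exp_three_quarters_sub_exp_neg_quarter_le (K : ℝ) :
    rexp (3 / 4 * K) - rexp (-(1 / 4) * K) ≤ rexp K - 1 := by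
  set t := rexp (K / 4)
  have ht : 0 < t := exp_pos _
  have h3 : rexp (3 / 4 * K) = t ^ 3 := by rw [← exp_nat_mul]; ring_nf
  have h4 : rexp K = t ^ 4 := by rw [← exp_nat_mul]; ring_nf
  have hinv : rexp (-(1 / 4) * K) = t⁻¹ := by rw [← exp_neg]; ring_nf
  rw [h3, h4, hinv, ← sub_nonneg]
  have key : 0 ≤ (t ^ 4 - 1) * (t - 1) / t := by
    apply div_nonneg _ ht.le
    rcases le_total 1 t with h | h
    · exact mul_nonneg (by nlinarith [one_le_pow₀ (n := 4) h]) (by linarith)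
    · exact mul_nonneg_of_nonpos_of_nonpos (by nlinarith [pow_le_one₀ (n := 4) ht.le h])
        (by linarith)
  convert key using 1
  field_simp

lemma sq_sub_div_sqrt_mul {x y : ℝ} (hx : 0 < x) (hy : 0 < y) :
    (x - y) ^ 2 / √(x * y) =
      x ^ (1 - (-1 / 2 : ℝ)) * y ^ (-1 / 2 : ℝ) - 2 * (x ^ (1 - 1 / 2 : ℝ) * y ^ (1 / 2 : ℝ)) +
        x ^ (1 - 3 / 2 : ℝ) * y ^ (3 / 2 : ℝ) := by
  have half (u : ℝ) : u ^ (1 / 2 : ℝ) = √u := (sqrt_eq_rpow u).symm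
  have neg_half (u : ℝ) (hu : 0 < u) : u ^ (-1 / 2 : ℝ) = (√u)⁻¹ := by
    rw [neg_div, rpow_neg hu.le, half]
  have three_halves (u : ℝ) (hu : 0 < u) : u ^ (3 / 2 : ℝ) = u * √u := by
    rw [show (3 / 2 : ℝ) = 1 + 1 / 2 by norm_num, rpow_add hu, rpow_one, half]
  rw [show (1 - (-1 / 2) : ℝ) = 3 / 2 by norm_num, show (1 - 1 / 2 : ℝ) = 1 / 2 by norm_num,
    show (1 - 3 / 2 : ℝ) = -1 / 2 by norm_num, half, half, neg_half x hx,
    neg_half y hy, three_halves x hx, three_halves y hy, sqrt_mul hx.le]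
  have hsx := sqrt_pos.2 hx
  have hsy := sqrt_pos.2 hy
  field_simp
  rw [sq_sqrt hx.le, sq_sqrt hy.le]
  ring

lemma mul_max_one_sub_div_sq_le {x y : ℝ} (hx : 0 < x) (hy : 0 < y) :
    x * max (1 - y / x) 0 ^ 2 ≤ max (x - y) 0 ^ 2 / √(x * y) := by
  rcases le_total y x with h | h
  · have hxy : √(x * y) ≤ x := by
      rw [sqrt_le_left hx.le]; nlinarith
    rw [max_eq_left (by rw [sub_nonneg, div_le_one hx]; exact h), max_eq_left (by linarith),
      one_sub_div hx.ne', div_pow, sq x, ← div_div, mul_div_cancel₀ _ hx.ne']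
    exact div_le_div_of_nonneg_left (sq_nonneg _) (sqrt_pos.2 (mul_pos hx hy)) hxy
  · rw [max_eq_right (by rw [sub_nonpos, one_le_div hx]; exact h)]
    rw [zero_pow two_ne_zero, mul_zero]
    positivity

lemma max_sub_sq_add_max_sub_sq (x y : ℝ) :
    max (x - y) 0 ^ 2 + max (y - x) 0 ^ 2 = (x - y) ^ 2 := by
  rcases le_total y x with h | h
  · rw [max_eq_left (by linarith), max_eq_right (by linarith)]; ring
  · rw [max_eq_right (by linarith), max_eq_left (by linarith)]; ring

section Gaussian

variable {d : ℕ} {σ : ℝ}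

lemma gaussPdf_pos (hσ : 0 < σ) (μ z : EuclideanSpace ℝ (Fin d)) : 0 < gaussPdf d μ σ z := by
  unfold gaussPdf
  positivity

@[fun_prop]
lemma measurable_gaussPdf (μ : EuclideanSpace ℝ (Fin d)) : Measurable (gaussPdf d μ σ) := by
  unfold gaussPdf
  fun_prop

lemma integral_gaussPdf (hσ : 0 < σ) (μ : EuclideanSpace ℝ (Fin d)) :
    ∫ z, gaussPdf d μ σ z = 1 := by
  have hb : 0 < 1 / (2 * σ ^ 2) := by positivity
  have h := integral_sub_right_eq_self (μ := volume)
    (fun v : EuclideanSpace ℝ (Fin d) => rexp (-(1 / (2 * σ ^ 2)) * ‖v‖ ^ 2)) μ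
  rw [GaussianFourier.integral_rexp_neg_mul_sq_norm hb, finrank_euclideanSpace_fin] at h
  have hexp : (fun z : EuclideanSpace ℝ (Fin d) => rexp (-‖z - μ‖ ^ 2 / (2 * σ ^ 2))) =
      fun z => rexp (-(1 / (2 * σ ^ 2)) * ‖z - μ‖ ^ 2) := by
    ext z; ring_nf
  unfold gaussPdf
  rw [integral_const_mul, hexp, h, div_div_eq_mul_div, div_one,
    show π * (2 * σ ^ 2) = 2 * π * σ ^ 2 by ring, ← rpow_add (by positivity),
    neg_div, neg_add_cancel, rpow_zero]

lemma integrable_gaussPdf (hσ : 0 < σ) (μ : EuclideanSpace ℝ (Fin d)) :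
    Integrable (gaussPdf d μ σ) :=
  .of_integral_ne_zero (by rw [integral_gaussPdf hσ]; exact one_ne_zero)

lemma isProbabilityMeasure_gaussMeasure (hσ : 0 < σ) (μ : EuclideanSpace ℝ (Fin d)) :
    IsProbabilityMeasure (gaussMeasure d μ σ) := by
  constructor
  rw [gaussMeasure, withDensity_apply _ MeasurableSet.univ, Measure.restrict_univ,
    ← ofReal_integral_eq_lintegral_ofReal (integrable_gaussPdf hσ μ)
      (.of_forall fun z => (gaussPdf_pos hσ μ z).le), integral_gaussPdf hσ, ENNReal.ofReal_one]

lemma integral_gaussMeasure (hσ : 0 < σ) (μ : EuclideanSpace ℝ (Fin d))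
    (f : EuclideanSpace ℝ (Fin d) → ℝ) :
    ∫ z, f z ∂gaussMeasure d μ σ = ∫ z, gaussPdf d μ σ z * f z :=
  integral_withDensity_ofReal (measurable_gaussPdf μ) (fun z => (gaussPdf_pos hσ μ z).le) f

lemma integrable_gaussMeasure_iff (hσ : 0 < σ) (μ : EuclideanSpace ℝ (Fin d))
    {f : EuclideanSpace ℝ (Fin d) → ℝ} :
    Integrable f (gaussMeasure d μ σ) ↔ Integrable fun z => gaussPdf d μ σ z * f z := by
  rw [gaussMeasure, integrable_withDensity_iff_integrable_smul'
    (measurable_gaussPdf μ).ennreal_ofReal (.of_forall fun _ => ENNReal.ofReal_lt_top)]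
  simp only [ENNReal.toReal_ofReal (gaussPdf_pos hσ μ _).le, smul_eq_mul]

lemma gaussMeasure_eq_withDensity (hσ : 0 < σ) (μ₁ μ₂ : EuclideanSpace ℝ (Fin d)) :
    gaussMeasure d μ₂ σ = (gaussMeasure d μ₁ σ).withDensity
      fun z => ENNReal.ofReal (gaussPdf d μ₂ σ z / gaussPdf d μ₁ σ z) := by
  have hratio : Measurable fun z => ENNReal.ofReal (gaussPdf d μ₂ σ z / gaussPdf d μ₁ σ z) := by
    fun_prop
  rw [gaussMeasure, gaussMeasure,
    ← withDensity_mul _ (measurable_gaussPdf μ₁).ennreal_ofReal hratio]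
  congr 1 with z
  rw [Pi.mul_apply, ← ENNReal.ofReal_mul (gaussPdf_pos hσ μ₁ z).le,
    mul_div_cancel₀ _ (gaussPdf_pos hσ μ₁ z).ne']

lemma gaussPdf_rpow_mul_rpow (hσ : 0 < σ) (μ₁ μ₂ z : EuclideanSpace ℝ (Fin d)) (a : ℝ) :
    gaussPdf d μ₁ σ z ^ (1 - a) * gaussPdf d μ₂ σ z ^ a =
      rexp (-(a * (1 - a)) * (‖μ₁ - μ₂‖ ^ 2 / (2 * σ ^ 2))) *
        gaussPdf d ((1 - a) • μ₁ + a • μ₂) σ z := by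
  have hC : 0 < (2 * π * σ ^ 2) ^ (-(d : ℝ) / 2) := by positivity
  have hexp : -‖z - μ₁‖ ^ 2 / (2 * σ ^ 2) * (1 - a) + -‖z - μ₂‖ ^ 2 / (2 * σ ^ 2) * a =
      -(a * (1 - a)) * (‖μ₁ - μ₂‖ ^ 2 / (2 * σ ^ 2)) +
        -‖z - ((1 - a) • μ₁ + a • μ₂)‖ ^ 2 / (2 * σ ^ 2) := by
    have := norm_sub_sq_interpolate a μ₁ μ₂ z
    field_simp
    linear_combination -this
  unfold gaussPdf
  rw [mul_rpow hC.le (exp_pos _).le, mul_rpow hC.le (exp_pos _).le, ← exp_mul, ← exp_mul,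
    mul_mul_mul_comm, ← rpow_add hC, sub_add_cancel, rpow_one, ← exp_add, hexp, exp_add]
  ring

lemma integral_gaussPdf_rpow_mul_rpow (hσ : 0 < σ) (μ₁ μ₂ : EuclideanSpace ℝ (Fin d)) (a : ℝ) :
    ∫ z, gaussPdf d μ₁ σ z ^ (1 - a) * gaussPdf d μ₂ σ z ^ a =
      rexp (-(a * (1 - a)) * (‖μ₁ - μ₂‖ ^ 2 / (2 * σ ^ 2))) := by
  simp_rw [gaussPdf_rpow_mul_rpow hσ, integral_const_mul, integral_gaussPdf hσ, mul_one]

lemma integrable_gaussPdf_rpow_mul_rpow (hσ : 0 < σ) (μ₁ μ₂ : EuclideanSpace ℝ (Fin d))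
    (a : ℝ) : Integrable fun z => gaussPdf d μ₁ σ z ^ (1 - a) * gaussPdf d μ₂ σ z ^ a := by
  simp_rw [gaussPdf_rpow_mul_rpow hσ]
  exact (integrable_gaussPdf hσ _).const_mul _

lemma memLp_two_gaussPdf_div_gaussPdf (hσ : 0 < σ) (μ₁ μ₂ : EuclideanSpace ℝ (Fin d)) :
    MemLp (fun z => gaussPdf d μ₂ σ z / gaussPdf d μ₁ σ z) 2 (gaussMeasure d μ₁ σ) := by
  have hmeas : Measurable fun z => gaussPdf d μ₂ σ z / gaussPdf d μ₁ σ z := by fun_prop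
  rw [memLp_two_iff_integrable_sq hmeas.aestronglyMeasurable, integrable_gaussMeasure_iff hσ]
  refine (integrable_gaussPdf_rpow_mul_rpow hσ μ₁ μ₂ 2).congr (.of_forall fun z => ?_)
  have hp₁ := (gaussPdf_pos hσ μ₁ z).ne'
  simp only [show (1 - 2 : ℝ) = -1 by norm_num, rpow_neg_one, rpow_two]
  field_simp

lemma integrable_sq_sub_div_sqrt_gaussPdf (hσ : 0 < σ) (μ₁ μ₂ : EuclideanSpace ℝ (Fin d)) :
    Integrable fun z => (gaussPdf d μ₁ σ z - gaussPdf d μ₂ σ z) ^ 2 /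
      √(gaussPdf d μ₁ σ z * gaussPdf d μ₂ σ z) := by
  simp_rw [sq_sub_div_sqrt_mul (gaussPdf_pos hσ μ₁ _) (gaussPdf_pos hσ μ₂ _)]
  exact ((integrable_gaussPdf_rpow_mul_rpow hσ μ₁ μ₂ _).sub
    ((integrable_gaussPdf_rpow_mul_rpow hσ μ₁ μ₂ _).const_mul 2)).add
      (integrable_gaussPdf_rpow_mul_rpow hσ μ₁ μ₂ _)

lemma integral_sq_sub_div_sqrt_gaussPdf (hσ : 0 < σ) (μ₁ μ₂ : EuclideanSpace ℝ (Fin d)) :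
    ∫ z, (gaussPdf d μ₁ σ z - gaussPdf d μ₂ σ z) ^ 2 /
      √(gaussPdf d μ₁ σ z * gaussPdf d μ₂ σ z) =
      2 * (rexp (3 / 4 * (‖μ₁ - μ₂‖ ^ 2 / (2 * σ ^ 2))) -
        rexp (-(1 / 4) * (‖μ₁ - μ₂‖ ^ 2 / (2 * σ ^ 2)))) := by
  simp_rw [sq_sub_div_sqrt_mul (gaussPdf_pos hσ μ₁ _) (gaussPdf_pos hσ μ₂ _)]
  have hJ := integrable_gaussPdf_rpow_mul_rpow hσ μ₁ μ₂
  rw [integral_add ?_ (hJ _), integral_sub (hJ _) ((hJ _).const_mul 2), integral_const_mul]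
  · simp only [integral_gaussPdf_rpow_mul_rpow hσ]
    ring_nf
  · exact (hJ _).sub ((hJ _).const_mul 2)

lemma gaussPdf_add_sub (μ₁ μ₂ z : EuclideanSpace ℝ (Fin d)) :
    gaussPdf d μ₁ σ (μ₁ + μ₂ - z) = gaussPdf d μ₂ σ z := by
  unfold gaussPdf
  rw [show μ₁ + μ₂ - z - μ₁ = μ₂ - z by abel, norm_sub_rev]

lemma integral_max_sub_sq_div_sqrt_gaussPdf_comm (μ₁ μ₂ : EuclideanSpace ℝ (Fin d)) :
    ∫ z, max (gaussPdf d μ₁ σ z - gaussPdf d μ₂ σ z) 0 ^ 2 /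
      √(gaussPdf d μ₁ σ z * gaussPdf d μ₂ σ z) =
    ∫ z, max (gaussPdf d μ₂ σ z - gaussPdf d μ₁ σ z) 0 ^ 2 /
      √(gaussPdf d μ₁ σ z * gaussPdf d μ₂ σ z) := by
  rw [← integral_sub_left_eq_self _ volume (μ₁ + μ₂)]
  congr 1 with z
  rw [gaussPdf_add_sub, add_comm μ₁ μ₂, gaussPdf_add_sub, mul_comm (gaussPdf d μ₂ σ z)]

lemma integral_max_one_sub_div_gaussPdf_sq_le (hσ : 0 < σ) (μ₁ μ₂ : EuclideanSpace ℝ (Fin d)) :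
    ∫ z, max (1 - gaussPdf d μ₂ σ z / gaussPdf d μ₁ σ z) 0 ^ 2 ∂gaussMeasure d μ₁ σ ≤
      rexp (‖μ₁ - μ₂‖ ^ 2 / (2 * σ ^ 2)) - 1 := by
  have hsymm := integral_max_sub_sq_div_sqrt_gaussPdf_comm (σ := σ) μ₁ μ₂
  have hsq := integrable_sq_sub_div_sqrt_gaussPdf hσ μ₁ μ₂
  have hsq_eq := integral_sq_sub_div_sqrt_gaussPdf hσ μ₁ μ₂
  set p₁ := gaussPdf d μ₁ σ
  set p₂ := gaussPdf d μ₂ σ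
  have hp₁ := gaussPdf_pos hσ μ₁
  have hp₂ := gaussPdf_pos hσ μ₂
  have hmeas : Measurable fun z => max (p₁ z - p₂ z) 0 ^ 2 / √(p₁ z * p₂ z) := by fun_prop
  have hdom : Integrable fun z => max (p₁ z - p₂ z) 0 ^ 2 / √(p₁ z * p₂ z) := by
    refine hsq.mono' hmeas.aestronglyMeasurable (.of_forall fun z => ?_)
    rw [Real.norm_of_nonneg (by positivity)]
    refine div_le_div_of_nonneg_right ?_ (sqrt_nonneg _)
    rw [← max_sub_sq_add_max_sub_sq]
    exact le_add_of_nonneg_right (sq_nonneg _)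
  have hhalf : ∫ z, max (p₂ z - p₁ z) 0 ^ 2 / √(p₁ z * p₂ z) =
      (∫ z, (p₁ z - p₂ z) ^ 2 / √(p₁ z * p₂ z)) -
        ∫ z, max (p₁ z - p₂ z) 0 ^ 2 / √(p₁ z * p₂ z) := by
    rw [← integral_sub hsq hdom]
    congr 1 with z
    rw [← max_sub_sq_add_max_sub_sq (p₁ z), add_div, add_sub_cancel_left]
  calc ∫ z, max (1 - p₂ z / p₁ z) 0 ^ 2 ∂gaussMeasure d μ₁ σ
      = ∫ z, p₁ z * max (1 - p₂ z / p₁ z) 0 ^ 2 := integral_gaussMeasure hσ μ₁ _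
    _ ≤ ∫ z, max (p₁ z - p₂ z) 0 ^ 2 / √(p₁ z * p₂ z) :=
        integral_mono_of_nonneg (.of_forall fun z => mul_nonneg (hp₁ z).le (sq_nonneg _)) hdom
          (.of_forall fun z => mul_max_one_sub_div_sq_le (hp₁ z) (hp₂ z))
    _ = rexp (3 / 4 * (‖μ₁ - μ₂‖ ^ 2 / (2 * σ ^ 2))) -
          rexp (-(1 / 4) * (‖μ₁ - μ₂‖ ^ 2 / (2 * σ ^ 2))) := by linarith
    _ ≤ rexp (‖μ₁ - μ₂‖ ^ 2 / (2 * σ ^ 2)) - 1 := exp_three_quarters_sub_exp_neg_quarter_le _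

end Gaussian

theorem stmt_2 (d : ℕ) (mu1 mu2 : EuclideanSpace ℝ (Fin d)) (σ : ℝ) (hσ : 0 < σ)
    (g : EuclideanSpace ℝ (Fin d) → ℝ) (hg : Measurable g) (hg0 : ∀ z, 0 ≤ g z)
    (hg2 : Integrable (fun z => g z ^ 2) (gaussMeasure d mu1 σ)) :
    (∫ z, g z ∂(gaussMeasure d mu1 σ)) - ∫ z, g z ∂(gaussMeasure d mu2 σ) ≤
      Real.sqrt (∫ z, g z ^ 2 ∂(gaussMeasure d mu1 σ)) *
        Real.sqrt (min (Real.exp (‖mu1 - mu2‖ ^ 2 / (2 * σ ^ 2)) - 1) 1) := by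
  have := isProbabilityMeasure_gaussMeasure hσ mu1
  have hgL2 : MemLp g 2 (gaussMeasure d mu1 σ) :=
    (memLp_two_iff_integrable_sq hg.aestronglyMeasurable).2 hg2
  have hratio0 z : 0 ≤ gaussPdf d mu2 σ z / gaussPdf d mu1 σ z :=
    (div_pos (gaussPdf_pos hσ mu2 z) (gaussPdf_pos hσ mu1 z)).le
  rw [gaussMeasure_eq_withDensity hσ mu1 mu2]
  refine (integral_sub_integral_withDensity_le hg0 hgL2 (by fun_prop) hratio0
    ((memLp_two_gaussPdf_div_gaussPdf hσ mu1 mu2).integrable_mul hgL2)).trans ?_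
  gcongr
  exact le_min (integral_max_one_sub_div_gaussPdf_sq_le hσ mu1 mu2)
    (integral_max_one_sub_sq_le_one hratio0)
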